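/- Let p ∈ [0,1] and let τ = (2p/3)·u u† + ((1−p)/8)·I₄ with u = (|00⟩+|11⟩)/√2 (the unnormalized localized noisy W state). Then the partial transpose τ^{T₂} is positive semidefinite if and only if p ≤ 3/11. -/

import Mathlib

/-!
Partially transposing the Bell projector `u u†` on the second factor gives half the swap
operator, so `τ^{T₂} = (p/3) SWAP + ((1-p)/8) I`. The swap is a Hermitian involution, so
`1 + SWAP = (1 + SWAP)ᴴ (1 + SWAP) / 2` is positive semidefinite, and it has the antisymmetric
eigenvector `|01⟩ - |10⟩` with eigenvalue `-1`. Hence for `a ≥ 0` the matrix `a SWAP + b I` is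
positive semidefinite exactly when `a ≤ b`, which here reads `p/3 ≤ (1-p)/8`.
-/

open Matrix BigOperators ComplexOrder

noncomputable section

/-- The rank-one matrix `x x†`. -/
def rankOne {n : Type*} (x : n → ℂ) : Matrix n n ℂ :=
  Matrix.of fun i j => x i * (starRingEnd ℂ) (x j)

/-- The Bell vector `(|00⟩ + |11⟩)/√2`. -/
def uBell : Fin 2 × Fin 2 → ℂ := fun x =>
  ((if x = (0, 0) then 1 else 0) + (if x = (1, 1) then 1 else 0)) / (Real.sqrt 2 : ℂ)

/-- Partial transpose on the second factor of a bipartite matrix. -/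
def pt2 {a b : ℕ} (M : Matrix (Fin a × Fin b) (Fin a × Fin b) ℂ) :
    Matrix (Fin a × Fin b) (Fin a × Fin b) ℂ :=
  Matrix.of fun p q => M (p.1, q.2) (q.1, p.2)

namespace Matrix

variable {𝕜 : Type*} [RCLike 𝕜] {n : Type*} [Fintype n]

lemma PosSemidef.nonneg_of_mulVec_eq_smul {M : Matrix n n 𝕜} (hM : M.PosSemidef) {v : n → 𝕜}
    (hv : v ≠ 0) {μ : ℝ} (hMv : M *ᵥ v = μ • v) : 0 ≤ μ := by
  have hv_pos : 0 < RCLike.re (star v ⬝ᵥ v) :=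
    (RCLike.pos_iff.1 (dotProduct_star_self_pos_iff.2 hv)).1
  have hquad := hM.re_dotProduct_nonneg v
  rw [hMv, dotProduct_smul, RCLike.smul_re] at hquad
  exact nonneg_of_mul_nonneg_left hquad hv_pos

variable [DecidableEq n]

lemma posSemidef_one_add_of_mul_self_eq_one {S : Matrix n n 𝕜} (hS : S.IsHermitian)
    (hS2 : S * S = 1) : (1 + S).PosSemidef := by
  have hsq : (1 + S)ᴴ * (1 + S) = (2 : ℝ) • (1 + S) := by
    rw [conjTranspose_add, conjTranspose_one, hS.eq, add_mul, mul_add, mul_add, hS2,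
      one_mul, mul_one, one_mul]
    module
  have h := (posSemidef_conjTranspose_mul_self (1 + S)).smul (a := (2⁻¹ : ℝ)) (by norm_num)
  rwa [hsq, smul_smul, inv_mul_cancel₀ two_ne_zero, one_smul] at h

theorem posSemidef_smul_add_smul_one_iff {S : Matrix n n 𝕜} (hS : S.IsHermitian)
    (hS2 : S * S = 1) {v : n → 𝕜} (hv : v ≠ 0) (hSv : S *ᵥ v = -v) {a b : ℝ} (ha : 0 ≤ a) :
    (a • S + b • 1).PosSemidef ↔ a ≤ b := by
  constructor
  · intro h
    have hMv : (a • S + b • 1) *ᵥ v = (b - a) • v := by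
      rw [add_mulVec, smul_mulVec, smul_mulVec, hSv, one_mulVec]
      module
    exact sub_nonneg.1 (h.nonneg_of_mulVec_eq_smul hv hMv)
  · intro hab
    have h : a • S + b • (1 : Matrix n n 𝕜) = (b - a) • 1 + a • (1 + S) := by module
    rw [h]
    exact (PosSemidef.one.smul (sub_nonneg.2 hab)).add
      ((posSemidef_one_add_of_mul_self_eq_one hS hS2).smul ha)

end Matrix

def swapMatrix (n R : Type*) [DecidableEq n] [Zero R] [One R] : Matrix (n × n) (n × n) R :=
  of fun x y => if x = y.swap then 1 else 0

section swapMatrix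

variable {n R : Type*} [DecidableEq n]

lemma swapMatrix_isHermitian [NonAssocSemiring R] [StarRing R] :
    (swapMatrix n R).IsHermitian := by
  ext x y
  have hswap : y = x.swap ↔ x = y.swap := by rw [← Prod.swap_eq_iff_eq_swap, eq_comm]
  simp [swapMatrix, hswap, apply_ite star]

variable [Fintype n]

lemma swapMatrix_mulVec [NonAssocSemiring R] (v : n × n → R) :
    swapMatrix n R *ᵥ v = fun x => v x.swap := by
  ext x
  simp [swapMatrix, mulVec, dotProduct, ← Prod.swap_eq_iff_eq_swap]

lemma swapMatrix_mul_self [NonAssocSemiring R] :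
    swapMatrix n R * swapMatrix n R = 1 := by
  ext x y
  simp [swapMatrix, mul_apply, one_apply]

lemma swapMatrix_mulVec_single_sub_single [Ring R] (i j : n) :
    swapMatrix n R *ᵥ (Pi.single (i, j) 1 - Pi.single (j, i) 1) =
      -(Pi.single (i, j) 1 - Pi.single (j, i) 1) := by
  ext x
  simp [swapMatrix_mulVec, Pi.single_apply, Prod.swap_eq_iff_eq_swap]

end swapMatrix

section pt2

variable {a b : ℕ}

lemma pt2_add (M N : Matrix (Fin a × Fin b) (Fin a × Fin b) ℂ) :
    pt2 (M + N) = pt2 M + pt2 N := rfl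

lemma pt2_smul (c : ℂ) (M : Matrix (Fin a × Fin b) (Fin a × Fin b) ℂ) :
    pt2 (c • M) = c • pt2 M := rfl

lemma pt2_one : pt2 (1 : Matrix (Fin a × Fin b) (Fin a × Fin b) ℂ) = 1 := by
  ext x y
  simp [pt2, one_apply, Prod.ext_iff, eq_comm]

end pt2

lemma pt2_rankOne_uBell : pt2 (rankOne uBell) = (2⁻¹ : ℝ) • swapMatrix (Fin 2) ℂ := by
  have h2 : ((Real.sqrt 2 : ℝ) : ℂ)⁻¹ * ((Real.sqrt 2 : ℝ) : ℂ)⁻¹ = 2⁻¹ := by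
    rw [← mul_inv, ← Complex.ofReal_mul, Real.mul_self_sqrt zero_le_two]
    norm_num
  ext ⟨i, j⟩ ⟨k, l⟩
  fin_cases i <;> fin_cases j <;> fin_cases k <;> fin_cases l <;>
    simp [pt2, rankOne, uBell, swapMatrix, h2]

theorem pt_localized_noisy_w_posSemidef_iff_general (p : ℝ) (hp0 : 0 ≤ p)
    (τ : Matrix (Fin 2 × Fin 2) (Fin 2 × Fin 2) ℂ)
    (hτ : τ = ((2 * p / 3 : ℝ) : ℂ) • rankOne uBell + (((1 - p) / 8 : ℝ) : ℂ) • 1) :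
    (pt2 τ).PosSemidef ↔ p ≤ 3 / 11 := by
  have hpt : pt2 τ = (p / 3) • swapMatrix (Fin 2) ℂ + ((1 - p) / 8) • 1 := by
    rw [hτ, pt2_add, pt2_smul, pt2_smul, pt2_rankOne_uBell, pt2_one, Complex.coe_smul,
      Complex.coe_smul, smul_smul]
    ring_nf
  have hv : (Pi.single (0, 1) 1 - Pi.single (1, 0) 1 : Fin 2 × Fin 2 → ℂ) ≠ 0 := by
    intro h
    simpa using congrFun h (0, 1)
  rw [hpt, posSemidef_smul_add_smul_one_iff swapMatrix_isHermitian swapMatrix_mul_self hv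
    (swapMatrix_mulVec_single_sub_single 0 1) (by positivity)]
  constructor <;> intro h <;> linarith

/-- For the unnormalized localized noisy W state `τ = (2p/3) u u† + ((1-p)/8) I₄`,
the partial transpose is positive semidefinite iff `p ≤ 3/11`. -/
theorem pt_localized_noisy_w_posSemidef_iff (p : ℝ) (hp0 : 0 ≤ p) (hp1 : p ≤ 1)
    (τ : Matrix (Fin 2 × Fin 2) (Fin 2 × Fin 2) ℂ)
    (hτ : τ = ((2 * p / 3 : ℝ) : ℂ) • rankOne uBell + (((1 - p) / 8 : ℝ) : ℂ) • 1) :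
    (pt2 τ).PosSemidef ↔ p ≤ 3 / 11 :=
  pt_localized_noisy_w_posSemidef_iff_general p hp0 τ hτ
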